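/- arXiv:1905.00769 — 5 statements merged into one kernel-verified Lean document; each statement's English description precedes it below -/
import Mathlib

section
/- Let ms : ℕ × ℕ → ℕ be the function determined by ms(e,f) = ms(f,e), ms(e,0) = ms(e,1) = 0, and ms(e,f) = f + ms(e−f, f) for e ≥ f ≥ 2. Then for all e, f ≥ 1 with (e,f) ≠ (1,1), one has ms(e,f) ≤ e + f − R(e,f), where R(e,f) = gcd(e,f) if gcd(e,f) > 1, and R(e,f) = 3 if gcd(e,f) = 1. -/
/-- The correction term `R(e,f)`: `gcd e f` if `gcd e f > 1`, and `3` otherwise. -/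
def Rcorr (e f : ℕ) : ℕ := if 1 < Nat.gcd e f then Nat.gcd e f else 3

/-!
Each step `ms e f = f + ms (e - f) f` of the Euclidean recursion adds `f` to both sides of the
bound and leaves the gcd, hence `R`, unchanged, so the bound propagates from `(e - f, f)` to
`(e, f)`. The recursion ends either at `(g, g)` with `g = gcd e f ≥ 2`, where `ms g g = g` makes
the bound an equality, or at `(k, 1)` with `k ≥ 2`, where `ms = 0` and `R = 3 ≤ k + 1`.
-/

theorem Rcorr_comm (e f : ℕ) : Rcorr e f = Rcorr f e := by
  simp only [Rcorr, Nat.gcd_comm]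

theorem Rcorr_sub_self_left {e f : ℕ} (h : f ≤ e) : Rcorr (e - f) f = Rcorr e f := by
  simp only [Rcorr, Nat.gcd_sub_self_left h]

theorem Rcorr_one_right (e : ℕ) : Rcorr e 1 = 3 := by
  simp [Rcorr]

theorem Rcorr_self {f : ℕ} (hf : 1 < f) : Rcorr f f = f := by
  rw [Rcorr, Nat.gcd_self, if_pos hf]

structure IsMultiplicitySum (ms : ℕ → ℕ → ℕ) : Prop where
  symm : ∀ e f, ms e f = ms f e
  zero : ∀ e, ms e 0 = 0
  one : ∀ e, ms e 1 = 0
  step : ∀ e f, 2 ≤ f → f ≤ e → ms e f = f + ms (e - f) f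

namespace IsMultiplicitySum

variable {ms : ℕ → ℕ → ℕ}

theorem apply_self (h : IsMultiplicitySum ms) {f : ℕ} (hf : 2 ≤ f) : ms f f = f := by
  rw [h.step f f hf le_rfl, Nat.sub_self, h.symm, h.zero, add_zero]

theorem add_Rcorr_le (h : IsMultiplicitySum ms) (e f : ℕ) (he : 1 ≤ e) (hf : 1 ≤ f)
    (hne : (e, f) ≠ (1, 1)) : ms e f + Rcorr e f ≤ e + f := by
  induction hn : e + f using Nat.strong_induction_on generalizing e f with | _ n ih
  wlog hfe : f ≤ e generalizing e f
  · rw [h.symm, Rcorr_comm]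
    exact this f e hf he (fun hfe => hne (congrArg Prod.swap hfe)) (by omega) (by omega)
  obtain rfl | hf2 : f = 1 ∨ 2 ≤ f := by omega
  · have he2 : 2 ≤ e := by simp_all; omega
    rw [h.one, Rcorr_one_right]
    omega
  obtain rfl | hlt := hfe.eq_or_lt
  · rw [h.apply_self hf2, Rcorr_self hf2, hn]
  · have hsub := ih (e - f + f) (by omega) (e - f) f (by omega) hf (by simp; omega) rfl
    rw [h.step e f hf2 hfe, ← Rcorr_sub_self_left hfe]
    omega

end IsMultiplicitySum

/-- For the multiplicity-sum function `ms` determined by symmetry,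
`ms e 0 = ms e 1 = 0`, and the Euclidean recursion, one has
`ms e f ≤ e + f - R(e,f)` for all `e, f ≥ 1` with `(e,f) ≠ (1,1)`. -/
theorem ms_bound (ms : ℕ → ℕ → ℕ)
    (hsymm : ∀ e f, ms e f = ms f e)
    (hzero : ∀ e, ms e 0 = 0)
    (hone : ∀ e, ms e 1 = 0)
    (hrec : ∀ e f, 2 ≤ f → f ≤ e → ms e f = f + ms (e - f) f)
    (e f : ℕ) (he : 1 ≤ e) (hf : 1 ≤ f) (hne : (e, f) ≠ (1, 1)) :
    (ms e f : ℤ) ≤ e + f - Rcorr e f := by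
  have hbound := IsMultiplicitySum.add_Rcorr_le ⟨hsymm, hzero, hone, hrec⟩ e f he hf hne
  omega
end

section
/- Let k ≥ 2 and let b, c ∈ {1, …, k−1} satisfy b + c = k − 1. Define ms and R as above. Then 3k − ms(k,b) − ms(k,c) ≥ 1 + R(k,b) + R(k,c); in particular 3k − ms(k,b) − ms(k,c) ≥ 2 > 0. -/
lemma Rcorr_ge_two (e f : ℕ) : 2 ≤ Rcorr e f := by
  unfold Rcorr; split <;> omega

lemma gcd_sub (e f : ℕ) (h : f ≤ e) : Nat.gcd (e - f) f = Nat.gcd e f := by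
  conv_rhs => rw [← Nat.sub_add_cancel h]
  rw [Nat.gcd_add_self_left]

lemma key (ms : ℕ → ℕ → ℕ)
    (hsymm : ∀ e f, ms e f = ms f e)
    (hzero : ∀ e, ms e 0 = 0)
    (hone : ∀ e, ms e 1 = 0)
    (hrec : ∀ e f, 2 ≤ f → f ≤ e → ms e f = f + ms (e - f) f) :
    ∀ n e f, e + f = n → f ≤ e → 2 ≤ e → ms e f + Rcorr e f ≤ e + f := by
  intro n
  induction n using Nat.strong_induction_on with
  | _ n ih =>
    intro e f hn hfe he2
    match f with
    | 0 =>
      have : Rcorr e 0 = e := by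
        unfold Rcorr; rw [Nat.gcd_zero_right]; simp [Nat.lt_of_lt_of_le one_lt_two he2]
      simp [hzero, this]
    | 1 =>
      have : Rcorr e 1 = 3 := by unfold Rcorr; simp
      simp [hone, this]; omega
    | (f + 2) =>
      have h2 : 2 ≤ f + 2 := by omega
      have hR : Rcorr (e - (f + 2)) (f + 2) = Rcorr e (f + 2) := by
        unfold Rcorr; rw [gcd_sub e (f+2) hfe]
      have := hrec e (f + 2) h2 hfe
      rcases le_or_gt (f + 2) (e - (f + 2)) with h | h
      · have hIH := ih e (by omega) (e - (f + 2)) (f + 2) (by omega) h (by omega)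
        omega
      · have hIH := ih e (by omega) (f + 2) (e - (f + 2)) (by omega) (by omega) h2
        have hs := hsymm (e - (f + 2)) (f + 2)
        have hRs : Rcorr (f + 2) (e - (f + 2)) = Rcorr (e - (f + 2)) (f + 2) := by
          unfold Rcorr; rw [Nat.gcd_comm]
        omega

/-- For `k ≥ 2` and `b, c ∈ {1, …, k-1}` with `b + c = k - 1`, one has
`3k - ms(k,b) - ms(k,c) ≥ 1 + R(k,b) + R(k,c)`; in particular
`3k - ms(k,b) - ms(k,c) ≥ 2 > 0`. -/
theorem cyclic_cover_positivity (ms : ℕ → ℕ → ℕ)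
    (hsymm : ∀ e f, ms e f = ms f e)
    (hzero : ∀ e, ms e 0 = 0)
    (hone : ∀ e, ms e 1 = 0)
    (hrec : ∀ e f, 2 ≤ f → f ≤ e → ms e f = f + ms (e - f) f)
    (k b c : ℕ) (hk : 2 ≤ k)
    (hb1 : 1 ≤ b) (hb2 : b ≤ k - 1) (hc1 : 1 ≤ c) (hc2 : c ≤ k - 1)
    (hbc : b + c = k - 1) :
    1 + (Rcorr k b : ℤ) + Rcorr k c ≤ 3 * k - ms k b - ms k c ∧
      2 ≤ 3 * (k : ℤ) - ms k b - ms k c ∧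
      0 < 3 * (k : ℤ) - ms k b - ms k c := by
  have h1 := key ms hsymm hzero hone hrec (k + b) k b rfl (by omega) hk
  have h2 := key ms hsymm hzero hone hrec (k + c) k c rfl (by omega) hk
  have r1 := Rcorr_ge_two k b
  have r2 := Rcorr_ge_two k c
  omega
end

section
/- Let k ≥ 2 and b, c ∈ {1, …, k−1} with b + c = k − 1. Set n = 1 + gcd(k,b) + gcd(k,c). Then (3k − ms(k,b) − ms(k,c)) − n ≥ (R(k,b) − gcd(k,b)) + (R(k,c) − gcd(k,c)) ≥ 0, where ms and R are as above. -/
/-- For `k ≥ 2`, `b, c ∈ {1, …, k-1}` with `b + c = k - 1` and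
`n = 1 + gcd(k,b) + gcd(k,c)`, one has
`(3k - ms(k,b) - ms(k,c)) - n ≥ (R(k,b) - gcd(k,b)) + (R(k,c) - gcd(k,c)) ≥ 0`. -/
theorem cyclic_cover_vdim_bound (ms : ℕ → ℕ → ℕ)
    (hsymm : ∀ e f, ms e f = ms f e)
    (hzero : ∀ e, ms e 0 = 0)
    (hone : ∀ e, ms e 1 = 0)
    (hrec : ∀ e f, 2 ≤ f → f ≤ e → ms e f = f + ms (e - f) f)
    (k b c n : ℕ) (hk : 2 ≤ k)
    (hb1 : 1 ≤ b) (hb2 : b ≤ k - 1) (hc1 : 1 ≤ c) (hc2 : c ≤ k - 1)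
    (hbc : b + c = k - 1)
    (hn : n = 1 + Nat.gcd k b + Nat.gcd k c) :
    ((Rcorr k b : ℤ) - Nat.gcd k b) + ((Rcorr k c : ℤ) - Nat.gcd k c) ≤
        (3 * (k : ℤ) - ms k b - ms k c) - n ∧
      0 ≤ ((Rcorr k b : ℤ) - Nat.gcd k b) + ((Rcorr k c : ℤ) - Nat.gcd k c) := by
  have key : ∀ e f : ℕ, 2 ≤ e → 1 ≤ f → f < e → ms e f + Rcorr e f ≤ e + f := by
    intro e
    induction e using Nat.strong_induction_on with
    | _ e IH =>
      intro f he hf hfe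
      rcases eq_or_lt_of_le hf with h1 | hf2
      · -- f = 1
        have hf1 : f = 1 := h1.symm
        subst hf1
        have : Nat.gcd e 1 = 1 := Nat.gcd_one_right e
        rw [hone]
        simp only [Rcorr, this]
        rw [if_neg (by norm_num)]
        omega
      · -- 2 ≤ f
        have hrw := hrec e f hf2 hfe.le
        have hgcd : Nat.gcd (e - f) f = Nat.gcd e f := Nat.gcd_sub_self_left hfe.le
        set e' := e - f with he'
        have hRe : Rcorr e' f = Rcorr e f := by simp only [Rcorr, hgcd]
        rcases lt_trichotomy e' f with hlt | heq | hgt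
        · rcases Nat.lt_or_ge e' 2 with h2 | h2
          · -- e' = 1 (e' = 0 impossible since f < e)
            have he1 : e' = 1 := by omega
            have : ms e' f = 0 := by rw [he1, hsymm, hone]
            have hg1 : Nat.gcd e f = 1 := by
              rw [← hgcd, he1, Nat.gcd_one_left]
            have hR : Rcorr e f = 3 := by simp [Rcorr, hg1]
            omega
          · -- 2 ≤ e' < f : swap and use IH at f
            have hfe' : f < e := by omega
            have := IH f hfe' e' hf2 (by omega) hlt
            have hsw : ms e' f = ms f e' := hsymm e' f
            have hRf : Rcorr f e' = Rcorr e f := by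
              simp only [Rcorr, Nat.gcd_comm f e', hgcd]
            omega
        · -- e' = f : e = 2f, gcd = f
          have hmsff : ms f f = f := by
            have := hrec f f hf2 le_rfl
            simp only [Nat.sub_self] at this
            rw [this, hsymm 0 f, hzero]
            omega
          have hgf : Nat.gcd e f = f := by rw [← hgcd, heq, Nat.gcd_self]
          have hR : Rcorr e f = f := by simp [Rcorr, hgf]; omega
          rw [hrw, heq, hmsff, hR]; omega
        · -- e' > f : IH at e'
          have he'2 : 2 ≤ e' := by omega
          have he'lt : e' < e := by omega
          have := IH e' he'lt f he'2 hf (by omega)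
          omega
  have hbk : b < k := by omega
  have hck : c < k := by omega
  have h1 := key k b hk hb1 hbk
  have h2 := key k c hk hc1 hck
  have hgb : 1 ≤ Nat.gcd k b := Nat.gcd_pos_of_pos_right k hb1
  have hgc : 1 ≤ Nat.gcd k c := Nat.gcd_pos_of_pos_right k hc1
  have hRb : Rcorr k b = Nat.gcd k b ∨ (Rcorr k b = 3 ∧ Nat.gcd k b = 1) := by
    unfold Rcorr; split <;> omega
  have hRc : Rcorr k c = Nat.gcd k c ∨ (Rcorr k c = 3 ∧ Nat.gcd k c = 1) := by
    unfold Rcorr; split <;> omega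
  constructor <;> [skip; skip] <;>
    · rcases hRb with hb | ⟨hb, hb'⟩ <;> rcases hRc with hc | ⟨hc, hc'⟩ <;> omega
end

section
/- Let k ≥ 2 and b ∈ {1, …, k−1} with gcd(k, b) = 1. Then ms(k, b) ≤ k + b − 3, where ms is determined by ms(e,f) = ms(f,e), ms(e,0) = ms(e,1) = 0, and ms(e,f) = f + ms(e−f,f) for e ≥ f ≥ 2. -/
theorem ms_aux (ms : ℕ → ℕ → ℕ)
    (hsymm : ∀ e f, ms e f = ms f e)
    (hone : ∀ e, ms e 1 = 0)
    (hrec : ∀ e f, 2 ≤ f → f ≤ e → ms e f = f + ms (e - f) f) :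
    ∀ n e f, e + f ≤ n → 1 ≤ f → f ≤ e → Nat.gcd e f = 1 → 2 ≤ e →
      (ms e f : ℤ) ≤ e + f - 3 := by
  intro n
  induction n using Nat.strong_induction_on with
  | _ n ih =>
    intro e f hn hf1 hfe hgcd he
    rcases eq_or_lt_of_le hf1 with h1 | hf2
    · rw [← h1, hone]
      push_cast; omega
    · -- f ≥ 2
      have hfe' : f < e := by
        rcases eq_or_lt_of_le hfe with h | h
        · exfalso; rw [h] at hgcd; rw [Nat.gcd_self] at hgcd; omega
        · exact h
      have hrw := hrec e f (by omega) (by omega)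
      have hg' : Nat.gcd (e - f) f = 1 := by
        rwa [Nat.gcd_sub_self_left (by omega)]
      set e' := e - f with he'
      have he'1 : 1 ≤ e' := by omega
      rcases le_or_gt f e' with h | h
      · have := ih (n - 1) (by omega) e' f (by omega) hf1 h hg' (by omega)
        rw [hrw]; push_cast at this ⊢; omega
      · rcases eq_or_lt_of_le he'1 with h1 | h2
        · rw [hrw, ← h1, hsymm, hone]
          push_cast; omega
        · have hg'' : Nat.gcd f e' = 1 := by rwa [Nat.gcd_comm]
          have := ih (n - 1) (by omega) f e' (by omega) (by omega) (by omega) hg'' (by omega)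
          rw [hrw, hsymm e' f]; push_cast at this ⊢; omega

/-- Coprime case of the multiplicity-sum bound: for `k ≥ 2` and
`b ∈ {1, …, k-1}` with `gcd(k,b) = 1`, one has `ms(k,b) ≤ k + b - 3`. -/
theorem ms_bound_coprime (ms : ℕ → ℕ → ℕ)
    (hsymm : ∀ e f, ms e f = ms f e)
    (hzero : ∀ e, ms e 0 = 0)
    (hone : ∀ e, ms e 1 = 0)
    (hrec : ∀ e f, 2 ≤ f → f ≤ e → ms e f = f + ms (e - f) f)
    (k b : ℕ) (hk : 2 ≤ k) (hb1 : 1 ≤ b) (hb2 : b ≤ k - 1)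
    (hgcd : Nat.gcd k b = 1) :
    (ms k b : ℤ) ≤ k + b - 3 :=
  ms_aux ms hsymm hone hrec (k + b) k b le_rfl hb1 (by omega) hgcd hk
end

section
/- Let k ≥ 2 and b ∈ {1, …, k−1} with d = gcd(k, b) > 1. Then ms(k, b) ≤ k + b − d, where ms is determined by ms(e,f) = ms(f,e), ms(e,0) = ms(e,1) = 0, and ms(e,f) = f + ms(e−f,f) for e ≥ f ≥ 2. Moreover this reduces to the scaling property ms(d·e, d·f) relating to the gcd-1 case via the Euclidean algorithm terminating at (d, 0). -/
lemma gcd_sub_aux (e f : ℕ) (hfe : f ≤ e) : Nat.gcd (e - f) f = Nat.gcd e f := by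
  rw [Nat.gcd_comm (e - f) f, Nat.gcd_comm e f]
  exact Nat.gcd_sub_self_right hfe

lemma ms_general (ms : ℕ → ℕ → ℕ)
    (hsymm : ∀ e f, ms e f = ms f e)
    (hzero : ∀ e, ms e 0 = 0)
    (hone : ∀ e, ms e 1 = 0)
    (hrec : ∀ e f, 2 ≤ f → f ≤ e → ms e f = f + ms (e - f) f) :
    ∀ n e f, e + f ≤ n → (ms e f : ℤ) ≤ e + f - Nat.gcd e f := by
  intro n
  induction n with
  | zero =>
    intro e f h
    have he : e = 0 := by omega
    have hf : f = 0 := by omega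
    subst he hf
    simp [hzero]
  | succ n ih =>
    intro e f h
    rcases le_or_gt f e with hfe | hef
    · match f, hfe with
      | 0, _ => simp [hzero]
      | 1, _ =>
        simp [hone, Nat.gcd_one_right]
      | (m+2), hfe =>
        set f := m + 2
        have h2 : 2 ≤ f := by omega
        rw [hrec e f h2 hfe]
        have := ih (e - f) f (by omega)
        rw [gcd_sub_aux e f hfe] at this
        push_cast at this ⊢
        omega
    · rw [hsymm, Nat.gcd_comm]
      match e, hef with
      | 0, _ => simp [hzero]
      | 1, _ =>
        simp [hone, Nat.gcd_one_right]
      | (m+2), hef =>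
        set e := m + 2
        have h2 : 2 ≤ e := by omega
        rw [hrec f e h2 (le_of_lt hef)]
        have := ih (f - e) e (by omega)
        rw [gcd_sub_aux f e (le_of_lt hef)] at this
        push_cast at this ⊢
        omega

/-- Non-coprime case of the multiplicity-sum bound: for `k ≥ 2` and
`b ∈ {1, …, k-1}` with `d = gcd(k,b) > 1`, one has `ms(k,b) ≤ k + b - d`;
moreover the Euclidean recursion for the pair `(k,b)` terminates at `(d,0)`,
i.e. `Nat.gcd k b = d` is preserved by the Euclidean steps defining `ms`. -/
theorem ms_bound_noncoprime (ms : ℕ → ℕ → ℕ)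
    (hsymm : ∀ e f, ms e f = ms f e)
    (hzero : ∀ e, ms e 0 = 0)
    (hone : ∀ e, ms e 1 = 0)
    (hrec : ∀ e f, 2 ≤ f → f ≤ e → ms e f = f + ms (e - f) f)
    (k b d : ℕ) (hk : 2 ≤ k) (hb1 : 1 ≤ b) (hb2 : b ≤ k - 1)
    (hd : d = Nat.gcd k b) (hd1 : 1 < d) :
    (ms k b : ℤ) ≤ k + b - d ∧
      ∀ e f, 2 ≤ f → f ≤ e → Nat.gcd (e - f) f = Nat.gcd e f := by
  constructor
  · have := ms_general ms hsymm hzero hone hrec (k + b) k b le_rfl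
    rw [← hd] at this
    exact this
  · intro e f _ hfe
    exact gcd_sub_aux e f hfe
end
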